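/- arXiv:1803.03224 — 3 statements merged into one kernel-verified Lean document; each statement's English description precedes it below -/
import Mathlib

section
/- Let y : [0, ∞) → ℝⁿ solve the linear ODE ẏ(t) = −L y(t) with y(0) = y₀, and set ȳ = (1/n) 1ₙᵀ y₀ and δ(t) = y(t) − ȳ 1ₙ. Then for all t ≥ 0, ‖δ(t)‖₂ ≤ ‖δ(0)‖₂ · exp(−λ₂(L) t). In particular every node value converges to the average consensus value ȳ exponentially with rate λ₂(L). -/
/-! The disagreement `δ` solves the same equation `δ' = -L δ`, since `L 1 = 0`, and its
coordinates sum to zero for all time, since the column sums of `L` vanish. Expanding `δ` in an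
orthonormal eigenbasis of `L`, such a vector is orthogonal to the eigenvectors of eigenvalue
`0`, which are constant because `G` is connected; every other eigenvalue is at least `λ₂`, so
`δ ⬝ L δ ≥ λ₂ ‖δ‖²`. Hence `(‖δ‖²)' = -2 δ ⬝ L δ ≤ -2 λ₂ ‖δ‖²`, and Grönwall's inequality gives
`‖δ(t)‖² ≤ ‖δ(0)‖² exp (-2 λ₂ t)`. -/

open Matrix Finset

/-- The second-smallest eigenvalue (algebraic connectivity, `λ₂`) of a Hermitian matrix,
obtained by sorting its eigenvalues in nondecreasing order. -/
noncomputable def lambda2 {n : ℕ} [NeZero n] {L : Matrix (Fin n) (Fin n) ℝ}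
    (hL : L.IsHermitian) : ℝ :=
  hL.eigenvalues (Tuple.sort hL.eigenvalues 1)

open Set

theorem Tuple.le_of_lt_sort_one {α : Type*} [LinearOrder α] {n : ℕ} [NeZero n] (f : Fin n → α)
    {j : Fin n} (hj : f j < f (Tuple.sort f 1)) (k : Fin n) : f j ≤ f k := by
  have hj0 : (Tuple.sort f).symm j = 0 := by
    by_contra hne
    have := Tuple.monotone_sort f (Fin.one_le_of_ne_zero hne)
    simp only [Function.comp_apply, Equiv.apply_symm_apply] at this
    exact (not_le.2 hj) this
  have := Tuple.monotone_sort f (Fin.zero_le ((Tuple.sort f).symm k))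
  simpa only [Function.comp_apply, ← hj0, Equiv.apply_symm_apply] using this

theorem HasDerivWithinAt.dotProduct {n : Type*} [Fintype n] {f g : ℝ → n → ℝ} {f' g' : n → ℝ}
    {s : Set ℝ} {t : ℝ} (hf : HasDerivWithinAt f f' s t) (hg : HasDerivWithinAt g g' s t) :
    HasDerivWithinAt (fun u => f u ⬝ᵥ g u) (f' ⬝ᵥ g t + f t ⬝ᵥ g') s t := by
  have := HasDerivWithinAt.fun_sum fun i (_ : i ∈ Finset.univ) =>
    (hasDerivWithinAt_pi.1 hf i).fun_mul (hasDerivWithinAt_pi.1 hg i)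
  rw [sum_add_distrib] at this
  exact this

namespace Matrix.IsHermitian

variable {n : Type*} [Fintype n] [DecidableEq n] {A : Matrix n n ℝ} (hA : A.IsHermitian)

theorem eq_sum_dotProduct_eigenvectorBasis_smul (x : n → ℝ) :
    x = ∑ j, (⇑(hA.eigenvectorBasis j) ⬝ᵥ x) • ⇑(hA.eigenvectorBasis j) := by
  have := congrArg WithLp.ofLp ((hA.eigenvectorBasis).sum_repr' (WithLp.toLp 2 x))
  simp only [EuclideanSpace.inner_eq_star_dotProduct, WithLp.ofLp_sum, WithLp.ofLp_smul] at this
  simpa [dotProduct_comm] using this.symm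

theorem dotProduct_self_eq_sum (x : n → ℝ) :
    x ⬝ᵥ x = ∑ j, (⇑(hA.eigenvectorBasis j) ⬝ᵥ x) ^ 2 := by
  nth_rw 1 [hA.eq_sum_dotProduct_eigenvectorBasis_smul x]
  simp only [sum_dotProduct, smul_dotProduct, smul_eq_mul, sq]

theorem dotProduct_mulVec_eq_sum (x : n → ℝ) :
    x ⬝ᵥ (A *ᵥ x) = ∑ j, hA.eigenvalues j * (⇑(hA.eigenvectorBasis j) ⬝ᵥ x) ^ 2 := by
  nth_rw 2 [hA.eq_sum_dotProduct_eigenvectorBasis_smul x]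
  rw [dotProduct_comm]
  simp only [mulVec_sum, mulVec_smul, hA.mulVec_eigenvectorBasis, sum_dotProduct, smul_dotProduct,
    smul_eq_mul]
  exact sum_congr rfl fun j _ => by ring

theorem mul_dotProduct_self_le {c : ℝ} (x : n → ℝ)
    (h : ∀ j, hA.eigenvalues j < c → ⇑(hA.eigenvectorBasis j) ⬝ᵥ x = 0) :
    c * (x ⬝ᵥ x) ≤ x ⬝ᵥ (A *ᵥ x) := by
  rw [hA.dotProduct_self_eq_sum, hA.dotProduct_mulVec_eq_sum, mul_sum]
  refine sum_le_sum fun j _ => ?_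
  rcases lt_or_ge (hA.eigenvalues j) c with hj | hj
  · simp [h j hj]
  · exact mul_le_mul_of_nonneg_right hj (sq_nonneg _)

end Matrix.IsHermitian

theorem dotProduct_self_le_mul_exp_of_hasDerivWithinAt {n : Type*} [Fintype n]
    {A : Matrix n n ℝ} {c : ℝ} {f : ℝ → n → ℝ}
    (hf : ∀ t ∈ Ici (0 : ℝ), HasDerivWithinAt f (-(A *ᵥ f t)) (Ici 0) t)
    (hc : ∀ t, 0 ≤ t → c * (f t ⬝ᵥ f t) ≤ f t ⬝ᵥ (A *ᵥ f t)) {t : ℝ} (ht : 0 ≤ t) :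
    f t ⬝ᵥ f t ≤ f 0 ⬝ᵥ f 0 * Real.exp (-(2 * c) * t) := by
  have hE : ∀ s ∈ Ici (0 : ℝ), HasDerivWithinAt (fun u => f u ⬝ᵥ f u)
      (-(2 * (f s ⬝ᵥ (A *ᵥ f s)))) (Ici 0) s := fun s hs => by
    convert (hf s hs).dotProduct (hf s hs) using 1
    rw [neg_dotProduct, dotProduct_neg, dotProduct_comm]
    ring
  have := le_gronwallBound_of_liminf_deriv_right_le (a := 0) (b := t) (ε := 0) (δ := f 0 ⬝ᵥ f 0)
    (K := -(2 * c)) (fun s hs => (hE s hs.1).continuousWithinAt.mono Icc_subset_Ici_self)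
    (fun s hs _ hr => ((hE s hs.1).mono (Ici_subset_Ici.2 hs.1)).liminf_right_slope_le hr)
    le_rfl (fun s hs => by linarith [hc s hs.1]) t ⟨ht, le_rfl⟩
  rwa [gronwallBound_ε0, sub_zero] at this

namespace SimpleGraph

variable {V : Type*} [Fintype V] [DecidableEq V] (G : SimpleGraph V) [DecidableRel G.Adj]

theorem sum_lapMatrix_mulVec {R : Type*} [CommRing R] (x : V → R) :
    ∑ i, (G.lapMatrix R *ᵥ x) i = 0 := by
  calc ∑ i, (G.lapMatrix R *ᵥ x) i = (fun _ => 1) ⬝ᵥ (G.lapMatrix R *ᵥ x) := by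
        simp [dotProduct]
    _ = (G.lapMatrix R *ᵥ fun _ => 1) ⬝ᵥ x := by
        rw [dotProduct_mulVec, ← mulVec_transpose, (G.isSymm_lapMatrix (R := R)).eq]
    _ = 0 := by rw [lapMatrix_mulVec_const_eq_zero, zero_dotProduct]

theorem sum_eq_of_hasDerivWithinAt_neg_lapMatrix_mulVec {f : ℝ → V → ℝ}
    (hf : ∀ t ∈ Ici (0 : ℝ), HasDerivWithinAt f (-(G.lapMatrix ℝ *ᵥ f t)) (Ici 0) t)
    {t : ℝ} (ht : 0 ≤ t) : ∑ i, f t i = ∑ i, f 0 i := by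
  have hS : ∀ s ∈ Ici (0 : ℝ), HasDerivWithinAt (fun u => ∑ i, f u i) 0 (Ici 0) s := by
    intro s hs
    have := HasDerivWithinAt.fun_sum fun i (_ : i ∈ Finset.univ) => hasDerivWithinAt_pi.1 (hf s hs) i
    simpa only [Pi.neg_apply, sum_neg_distrib, G.sum_lapMatrix_mulVec, neg_zero] using this
  exact constant_of_has_deriv_right_zero
    (fun s hs => (hS s hs.1).continuousWithinAt.mono Icc_subset_Ici_self)
    (fun s hs => (hS s hs.1).mono (Ici_subset_Ici.2 hs.1)) t ⟨ht, le_rfl⟩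

end SimpleGraph

theorem SimpleGraph.lambda2_mul_dotProduct_self_le {n : ℕ} [NeZero n] {G : SimpleGraph (Fin n)}
    [DecidableRel G.Adj] (hconn : G.Connected) (x : Fin n → ℝ) (hx : ∑ i, x i = 0) :
    lambda2 (G.posSemidef_lapMatrix ℝ).isHermitian * (x ⬝ᵥ x) ≤ x ⬝ᵥ (G.lapMatrix ℝ *ᵥ x) := by
  set hL := (G.posSemidef_lapMatrix ℝ).isHermitian
  refine hL.mul_dotProduct_self_le x fun j hj => ?_
  have hmin := Tuple.le_of_lt_sort_one hL.eigenvalues hj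
  -- Testing the bound at the minimal eigenvalue against the constant vector forces it to be `0`.
  have hnonpos : hL.eigenvalues j ≤ 0 := by
    have h := hL.mul_dotProduct_self_le (c := hL.eigenvalues j) (fun _ => 1)
      fun k hk => absurd (hmin k) (not_le.2 hk)
    rw [G.lapMatrix_mulVec_const_eq_zero, dotProduct_zero] at h
    have hcard : (0 : ℝ) < (fun _ : Fin n => (1 : ℝ)) ⬝ᵥ fun _ => 1 := by
      simp [dotProduct, Nat.pos_of_neZero n]
    exact nonpos_of_mul_nonpos_left h hcard
  have hker : G.lapMatrix ℝ *ᵥ ⇑(hL.eigenvectorBasis j) = 0 := by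
    rw [hL.mulVec_eigenvectorBasis,
      le_antisymm hnonpos ((G.posSemidef_lapMatrix ℝ).eigenvalues_nonneg j), zero_smul]
  have hconst := G.lapMatrix_mulVec_eq_zero_iff_forall_reachable.1 hker
  calc ⇑(hL.eigenvectorBasis j) ⬝ᵥ x = ∑ i, hL.eigenvectorBasis j 0 * x i :=
        sum_congr rfl fun i _ => by rw [hconst i 0 (hconn.preconnected i 0)]
    _ = 0 := by rw [← mul_sum, hx, mul_zero]

theorem statement_0_general (n : ℕ) [NeZero n]
    (G : SimpleGraph (Fin n)) [DecidableRel G.Adj] (hconn : G.Connected)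
    (y : ℝ → (Fin n → ℝ)) (y₀ : Fin n → ℝ) (hy0 : y 0 = y₀)
    (hode : ∀ t ∈ Set.Ici (0 : ℝ),
      HasDerivWithinAt y (-(G.lapMatrix ℝ).mulVec (y t)) (Set.Ici (0 : ℝ)) t)
    (ybar : ℝ) (hybar : ybar = (n : ℝ)⁻¹ * ∑ i, y₀ i)
    (δ : ℝ → (Fin n → ℝ)) (hδ : ∀ t, δ t = fun i => y t i - ybar) :
    ∀ t, 0 ≤ t →
      Real.sqrt (∑ i, (δ t i) ^ 2) ≤
        Real.sqrt (∑ i, (δ 0 i) ^ 2) *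
          Real.exp (-(lambda2 (G.posSemidef_lapMatrix ℝ).isHermitian) * t) := by
  intro t ht
  have hδ' : δ = fun s => y s - fun _ => ybar := funext hδ
  have hδode : ∀ s ∈ Ici (0 : ℝ), HasDerivWithinAt δ (-(G.lapMatrix ℝ *ᵥ δ s)) (Ici 0) s := by
    intro s hs
    have hconst : G.lapMatrix ℝ *ᵥ (fun _ => ybar) = 0 := by
      rw [show (fun _ : Fin n => ybar) = ybar • fun _ => (1 : ℝ) by ext; simp, mulVec_smul,
        G.lapMatrix_mulVec_const_eq_zero, smul_zero]
    rw [hδ', mulVec_sub, hconst, sub_zero]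
    exact (hode s hs).sub_const _
  have hsum : ∀ s, 0 ≤ s → ∑ i, δ s i = 0 := by
    intro s hs
    simp only [hδ, sum_sub_distrib, G.sum_eq_of_hasDerivWithinAt_neg_lapMatrix_mulVec hode hs, hy0,
      hybar, sum_const, card_univ, Fintype.card_fin, nsmul_eq_mul]
    rw [mul_inv_cancel_left₀ (Nat.cast_ne_zero.2 (NeZero.ne n) : (n : ℝ) ≠ 0), sub_self]
  have hdecay := dotProduct_self_le_mul_exp_of_hasDerivWithinAt hδode
    (fun s hs => G.lambda2_mul_dotProduct_self_le hconn (δ s) (hsum s hs)) ht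
  simp only [dotProduct, ← sq] at hdecay
  rw [Real.sqrt_le_left (by positivity), mul_pow, Real.sq_sqrt (by positivity), ← Real.exp_nat_mul]
  convert hdecay using 3
  ring

/-- **Lemma 1.** If `y` solves `ẏ = -L y` on `[0, ∞)` with `y 0 = y₀`, where `L` is the
Laplacian of a connected graph on `n ≥ 2` vertices, then with `ȳ = (1/n) 1ᵀ y₀` the
disagreement `δ(t) = y(t) - ȳ 1` satisfies `‖δ(t)‖₂ ≤ ‖δ(0)‖₂ exp (-λ₂(L) t)`. -/
theorem statement_0 (n : ℕ) (hn : 2 ≤ n) [NeZero n]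
    (G : SimpleGraph (Fin n)) [DecidableRel G.Adj] (hconn : G.Connected)
    (y : ℝ → (Fin n → ℝ)) (y₀ : Fin n → ℝ) (hy0 : y 0 = y₀)
    (hode : ∀ t ∈ Set.Ici (0 : ℝ),
      HasDerivWithinAt y (-(G.lapMatrix ℝ).mulVec (y t)) (Set.Ici (0 : ℝ)) t)
    (ybar : ℝ) (hybar : ybar = (n : ℝ)⁻¹ * ∑ i, y₀ i)
    (δ : ℝ → (Fin n → ℝ)) (hδ : ∀ t, δ t = fun i => y t i - ybar) :
    ∀ t, 0 ≤ t →
      Real.sqrt (∑ i, (δ t i) ^ 2) ≤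
        Real.sqrt (∑ i, (δ 0 i) ^ 2) *
          Real.exp (-(lambda2 (G.posSemidef_lapMatrix ℝ).isHermitian) * t) :=
  statement_0_general n G hconn y y₀ hy0 hode ybar hybar δ hδ
end

section
/- The matrix exponential of −L t converges to the averaging matrix: lim_{t→∞} exp(−L t) = (1/n) 1ₙ 1ₙᵀ. -/
/-!
Let `P = n⁻¹ 1ₙ 1ₙᵀ`, the orthogonal projection onto the constant vectors. Since the rows and
columns of `L` sum to zero, `L P = P L = 0`, which gives
`exp (-t L) = P + exp (-t (L + P)) (1 - P)`. For a connected graph the kernel of `L` consists of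
the constant vectors, on which `P` is positive, so `L + P` is positive definite. Its spectrum is
then a compact subset of `(0, ∞)`, on which `x ↦ exp (-t x)` tends to `0` uniformly, and the
continuity of the functional calculus gives `exp (-t (L + P)) → 0`.
-/

open Matrix NormedSpace Filter Topology

section BanachAlgebra

variable {𝔸 : Type*} [NormedRing 𝔸] [NormedAlgebra ℚ 𝔸] [CompleteSpace 𝔸]

theorem NormedSpace.exp_mul_eq_self_of_mul_eq_zero {x y : 𝔸} (h : x * y = 0) :
    exp x * y = y := by
  have : SemiconjBy y 0 x := by simp [SemiconjBy, h]
  simpa [SemiconjBy] using this.exp_right.symm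

theorem NormedSpace.exp_neg_smul_eq_add_exp_mul {R : Type*} [CommRing R] [Algebra R 𝔸]
    {L P : 𝔸} (hP : IsIdempotentElem P) (hLP : L * P = 0) (hPL : P * L = 0) (t : R) :
    exp (-(t • L)) = P + exp (-(t • (L + P))) * (1 - P) := by
  have hcomm : Commute (-(t • L)) (-(t • P)) := by
    simp [Commute, SemiconjBy, hLP, hPL]
  have hP' : -(t • P) * (1 - P) = 0 := by
    simp [mul_sub, hP.eq]
  calc exp (-(t • L)) = exp (-(t • L)) * P + exp (-(t • L)) * (1 - P) := by noncomm_ring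
    _ = P + exp (-(t • L)) * (exp (-(t • P)) * (1 - P)) := by
      rw [exp_mul_eq_self_of_mul_eq_zero (by simp [hLP]), exp_mul_eq_self_of_mul_eq_zero hP']
    _ = P + exp (-(t • (L + P))) * (1 - P) := by
      rw [smul_add, neg_add, exp_add_of_commute hcomm, mul_assoc]

end BanachAlgebra

section CStarAlgebra

variable {A : Type*} [NormedRing A] [StarRing A] [NormedAlgebra ℝ A] [PartialOrder A]
  [StarOrderedRing A] [ContinuousFunctionalCalculus ℝ A IsSelfAdjoint] [NonnegSpectrumClass ℝ A]

theorem IsStrictlyPositive.tendsto_exp_neg_smul_atTop {a : A} (ha : IsStrictlyPositive a) :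
    Tendsto (fun t : ℝ => exp (-(t • a))) atTop (𝓝 0) := by
  have hexp (t : ℝ) : exp (-(t • a)) = cfc (fun x => Real.exp (-(t * x))) a := by
    rw [cfc_comp' Real.exp (fun x => -(t * x)) a, CFC.real_exp_eq_normedSpace_exp, cfc_neg,
      cfc_const_mul_id t a]
  obtain ⟨δ, hδ, hδle⟩ :=
    (ContinuousFunctionalCalculus.isCompact_spectrum (R := ℝ) a).exists_forall_le'
      continuousOn_id fun x hx => ha.spectrum_pos hx
  have hdecay : Tendsto (fun t : ℝ => Real.exp (-(t * δ))) atTop (𝓝 0) :=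
    Real.tendsto_exp_atBot.comp (tendsto_neg_atTop_atBot.comp (tendsto_id.atTop_mul_const hδ))
  have hunif : TendstoUniformlyOn (fun t x => Real.exp (-(t * x))) 0 atTop (spectrum ℝ a) := by
    rw [Metric.tendstoUniformlyOn_iff]
    intro ε hε
    filter_upwards [hdecay.eventually (gt_mem_nhds hε), eventually_ge_atTop 0] with t ht ht0 x hx
    rw [Pi.zero_apply, dist_zero_left, Real.norm_of_nonneg (Real.exp_nonneg _)]
    calc Real.exp (-(t * x)) ≤ Real.exp (-(t * δ)) := by
          gcongr; exact hδle x hx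
      _ < ε := ht
  simpa only [hexp, cfc_zero] using
    tendsto_cfc_fun hunif (Eventually.of_forall fun t => by fun_prop)

end CStarAlgebra

section MatrixNorm

open scoped Matrix.Norms.L2Operator MatrixOrder

theorem Matrix.PosDef.tendsto_exp_neg_smul_atTop {m : Type*} [Fintype m] [DecidableEq m]
    {M : Matrix m m ℝ} (hM : M.PosDef) :
    Tendsto (fun t : ℝ => exp (-(t • M))) atTop (𝓝 0) :=
  hM.isStrictlyPositive.tendsto_exp_neg_smul_atTop

end MatrixNorm

theorem Matrix.isIdempotentElem_inv_card_smul_of_one {n K : Type*} [Fintype n] [Field K] :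
    IsIdempotentElem ((Fintype.card n : K)⁻¹ • of fun _ _ : n => (1 : K)) := by
  ext i j
  rcases eq_or_ne (Fintype.card n : K) 0 with h | h
  · simp [h]
  · simp [mul_apply, h]

namespace SimpleGraph

variable {V : Type*} [Fintype V] [DecidableEq V] (G : SimpleGraph V) [DecidableRel G.Adj]

theorem lapMatrix_mul_of_one {R : Type*} [Ring R] :
    G.lapMatrix R * of (fun _ _ => 1) = 0 := by
  ext i j
  simpa [mul_apply, mulVec, dotProduct] using
    congrFun (G.lapMatrix_mulVec_const_eq_zero (R := R)) i

theorem of_one_mul_lapMatrix {R : Type*} [CommRing R] :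
    of (fun _ _ => 1) * G.lapMatrix R = 0 := by
  have hJ : (of fun _ _ : V => (1 : R))ᵀ = of fun _ _ => 1 := rfl
  rw [← hJ, ← (G.isSymm_lapMatrix (R := R)).eq, ← transpose_mul, lapMatrix_mul_of_one,
    transpose_zero]

variable {G} in
theorem Connected.posDef_lapMatrix_add_smul_of_one (hG : G.Connected) {c : ℝ} (hc : 0 < c) :
    (G.lapMatrix ℝ + c • of fun _ _ => 1).PosDef := by
  have hJ : (of fun _ _ : V => (1 : ℝ)).IsHermitian := by ext; simp
  refine .of_dotProduct_mulVec_pos ((G.isHermitian_lapMatrix ℝ).add (hJ.smul (.all c)))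
    fun x hx => ?_
  have hquad : star x ⬝ᵥ ((G.lapMatrix ℝ + c • of fun _ _ => 1) *ᵥ x)
      = toLinearMap₂' ℝ (G.lapMatrix ℝ) x x + c * (∑ i, x i) ^ 2 := by
    rw [add_mulVec, dotProduct_add, star_trivial, ← toLinearMap₂'_apply', smul_mulVec]
    simp [dotProduct, mulVec, sq, Finset.mul_sum, mul_comm, mul_left_comm]
  have hL : 0 ≤ toLinearMap₂' ℝ (G.lapMatrix ℝ) x x := by
    rw [lapMatrix_toLinearMap₂']; positivity
  rw [hquad]
  by_contra! hle
  have hL0 : toLinearMap₂' ℝ (G.lapMatrix ℝ) x x = 0 := by nlinarith [sq_nonneg (∑ i, x i)]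
  have hsum0 : ∑ i, x i = 0 := by
    refine pow_eq_zero_iff two_ne_zero |>.1 ?_
    nlinarith [sq_nonneg (∑ i, x i)]
  obtain ⟨i₀⟩ := hG.nonempty
  have hconst (i : V) : x i = x i₀ :=
    (G.lapMatrix_toLinearMap₂'_apply'_eq_zero_iff_forall_reachable x).1 hL0 i i₀
      (hG.preconnected i i₀)
  have hx₀ : x i₀ = 0 := by
    simp only [hconst, Finset.sum_const, Finset.card_univ, nsmul_eq_mul, mul_eq_zero] at hsum0
    exact hsum0.resolve_left (Nat.cast_ne_zero.2 (Fintype.card_pos_iff.2 ⟨i₀⟩).ne')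
  exact hx (funext fun i => by rw [hconst i, hx₀, Pi.zero_apply])

end SimpleGraph

theorem statement_2_general (n : ℕ)
    (G : SimpleGraph (Fin n)) [DecidableRel G.Adj] (hconn : G.Connected) :
    Filter.Tendsto (fun t : ℝ => NormedSpace.exp (-(t • G.lapMatrix ℝ)))
      Filter.atTop
      (nhds ((n : ℝ)⁻¹ • Matrix.of (fun _ _ : Fin n => (1 : ℝ)))) := by
  set P : Matrix (Fin n) (Fin n) ℝ := (n : ℝ)⁻¹ • of fun _ _ => 1
  have hP : IsIdempotentElem P := by
    simpa only [Fintype.card_fin] using isIdempotentElem_inv_card_smul_of_one (n := Fin n) (K := ℝ)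
  have hLP : G.lapMatrix ℝ * P = 0 := by rw [mul_smul_comm, G.lapMatrix_mul_of_one, smul_zero]
  have hPL : P * G.lapMatrix ℝ = 0 := by rw [smul_mul_assoc, G.of_one_mul_lapMatrix, smul_zero]
  -- `exp` does not depend on the norm, so any complete algebra norm may be chosen here.
  have hdecomp (t : ℝ) :
      exp (-(t • G.lapMatrix ℝ)) = P + exp (-(t • (G.lapMatrix ℝ + P))) * (1 - P) :=
    open scoped Matrix.Norms.Operator in exp_neg_smul_eq_add_exp_mul hP hLP hPL t
  have hinv : (0 : ℝ) < (n : ℝ)⁻¹ := by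
    simpa [Fin.pos_iff_nonempty] using hconn.nonempty
  have hdecay := (hconn.posDef_lapMatrix_add_smul_of_one hinv).tendsto_exp_neg_smul_atTop
  rw [tendsto_congr hdecomp]
  simpa only [zero_mul, add_zero] using (hdecay.mul_const (1 - P)).const_add P

/-- **Limit of the consensus semigroup.** For the Laplacian `L` of a connected graph on
`n ≥ 2` vertices, the matrix exponential `exp (-L t)` converges, as `t → ∞`, to the
averaging matrix `(1/n) 1ₙ 1ₙᵀ`. -/
theorem statement_2 (n : ℕ) (hn : 2 ≤ n)
    (G : SimpleGraph (Fin n)) [DecidableRel G.Adj] (hconn : G.Connected) :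
    Filter.Tendsto (fun t : ℝ => NormedSpace.exp (-(t • G.lapMatrix ℝ)))
      Filter.atTop
      (nhds ((n : ℝ)⁻¹ • Matrix.of (fun _ _ : Fin n => (1 : ℝ)))) :=
  statement_2_general n G hconn
end

section
/- Let c > 0, t₀ ∈ ℝ, and let V : [t₀, ∞) → ℝ be differentiable with V(t) ≥ 0 for all t ≥ t₀ and V′(t) ≤ −c √(V(t)) for all t ≥ t₀ with V(t) > 0. Then V(t) = 0 for all t ≥ t₀ + 2√(V(t₀))/c; moreover √(V(t)) ≤ √(V(t₀)) − (c/2)(t − t₀) for all t in [t₀, t₀ + 2√(V(t₀))/c]. -/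
/-!
Where `V > 0`, the hypothesis says `(√V)' = V' / (2√V) ≤ -c/2`, so `√V` decreases at least at
rate `c/2` and reaches `0` no later than `t₀ + 2√(V t₀)/c`. At a zero of `V` inside the domain `V`
has a local minimum, hence `V' = 0` there; so `V' ≤ 0` everywhere, `V` is antitone, and once it
vanishes it stays `0`.
-/

open Real Set

theorem antitoneOn_of_hasDerivAt_nonpos_of_pos {D : Set ℝ} (hD : Convex ℝ D) {V V' : ℝ → ℝ}
    (hnonneg : ∀ t ∈ D, 0 ≤ V t) (hderiv : ∀ t ∈ D, HasDerivAt V (V' t) t)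
    (hpos : ∀ t ∈ D, 0 < V t → V' t ≤ 0) : AntitoneOn V D := by
  refine antitoneOn_of_hasDerivWithinAt_nonpos hD
    (fun t ht => (hderiv t ht).continuousAt.continuousWithinAt)
    (fun t ht => (hderiv t (interior_subset ht)).hasDerivWithinAt) fun t ht => ?_
  have htD := interior_subset ht
  rcases (hnonneg t htD).eq_or_lt with hzero | hV
  · have hmin : IsLocalMin V t := by
      filter_upwards [mem_interior_iff_mem_nhds.1 ht] with s hs
      exact hzero ▸ hnonneg s hs
    exact (hmin.hasDerivAt_eq_zero (hderiv t htD)).le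
  · exact hpos t htD hV

theorem sqrt_le_sub_mul_of_hasDerivAt_le {V V' : ℝ → ℝ} {a b c : ℝ} (hab : a ≤ b)
    (hderiv : ∀ t ∈ Icc a b, HasDerivAt V (V' t) t) (hpos : ∀ t ∈ Icc a b, 0 < V t)
    (hineq : ∀ t ∈ Icc a b, V' t ≤ -c * √(V t)) :
    √(V b) ≤ √(V a) - c / 2 * (b - a) := by
  have hderiv' : ∀ t ∈ Icc a b,
      HasDerivAt (fun s => √(V s) + c / 2 * s) (V' t / (2 * √(V t)) + c / 2) t := fun t ht =>
    ((hderiv t ht).sqrt (hpos t ht).ne').add (by simpa using (hasDerivAt_id t).const_mul (c / 2))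
  have hanti : AntitoneOn (fun s => √(V s) + c / 2 * s) (Icc a b) := by
    refine antitoneOn_of_hasDerivWithinAt_nonpos (convex_Icc a b)
      (fun t ht => (hderiv' t ht).continuousAt.continuousWithinAt)
      (fun t ht => (hderiv' t (interior_subset ht)).hasDerivWithinAt) fun t ht => ?_
    have hsqrt : 0 < √(V t) := sqrt_pos.2 (hpos t (interior_subset ht))
    rw [div_add' _ _ _ (by positivity), div_nonpos_iff]
    exact Or.inr ⟨by linarith [hineq t (interior_subset ht)], by positivity⟩
  have hba : √(V b) + c / 2 * b ≤ √(V a) + c / 2 * a := hanti ⟨le_rfl, hab⟩ ⟨hab, le_rfl⟩ hab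
  linarith

/-- **Finite-time comparison lemma.** Let `c > 0` and let `V : [t₀, ∞) → ℝ` be differentiable
with `V ≥ 0` and `V' ≤ -c √V` whenever `V > 0`. Then `√(V t) ≤ √(V t₀) - (c/2) (t - t₀)` on
`[t₀, t₀ + 2√(V t₀)/c]`, and `V t = 0` for all `t ≥ t₀ + 2√(V t₀)/c`. -/
theorem statement_11 (c : ℝ) (hc : 0 < c) (t₀ : ℝ)
    (V V' : ℝ → ℝ)
    (hnonneg : ∀ t, t₀ ≤ t → 0 ≤ V t)
    (hderiv : ∀ t, t₀ ≤ t → HasDerivAt V (V' t) t)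
    (hineq : ∀ t, t₀ ≤ t → 0 < V t → V' t ≤ -c * Real.sqrt (V t)) :
    (∀ t, t₀ + 2 * Real.sqrt (V t₀) / c ≤ t → V t = 0) ∧
    (∀ t, t₀ ≤ t → t ≤ t₀ + 2 * Real.sqrt (V t₀) / c →
      Real.sqrt (V t) ≤ Real.sqrt (V t₀) - c / 2 * (t - t₀)) := by
  have hanti : AntitoneOn V (Ici t₀) :=
    antitoneOn_of_hasDerivAt_nonpos_of_pos (convex_Ici t₀) hnonneg hderiv fun t ht hV =>
      (hineq t ht hV).trans (by nlinarith [sqrt_nonneg (V t)])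
  have hsqrt : ∀ t, t₀ ≤ t → t ≤ t₀ + 2 * √(V t₀) / c → √(V t) ≤ √(V t₀) - c / 2 * (t - t₀) := by
    intro t ht htT
    rcases (hnonneg t ht).eq_or_lt with hzero | hV
    · have := (le_div_iff₀ hc).1 (by linarith : t - t₀ ≤ 2 * √(V t₀) / c)
      rw [← hzero, sqrt_zero]
      linarith
    · exact sqrt_le_sub_mul_of_hasDerivAt_le ht (fun s hs => hderiv s hs.1)
        (fun s hs => hV.trans_le (hanti hs.1 ht hs.2))
        (fun s hs => hineq s hs.1 (hV.trans_le (hanti hs.1 ht hs.2)))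
  refine ⟨fun t ht => ?_, hsqrt⟩
  set T := t₀ + 2 * √(V t₀) / c with hTdef
  have hT : t₀ ≤ T := le_add_of_nonneg_right (by positivity)
  have hVT : V T ≤ 0 := by
    rw [← sqrt_eq_zero']
    refine le_antisymm ((hsqrt T hT le_rfl).trans_eq ?_) (sqrt_nonneg _)
    rw [hTdef]
    field_simp
    ring
  exact le_antisymm ((hanti hT (hT.trans ht) ht).trans hVT) (hnonneg t (hT.trans ht))
end
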